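/- Let λ ∈ ℝ. Define k : ℝ² → ℝ by the everywhere absolutely convergent power series k(x,y) := −(λ y / 2) · Σ_{n=0}^∞ (λ (x² − y²) / 4)ⁿ / (n! (n+1)!). Then k is smooth and satisfies, on the triangle T = {(x,y) ∈ ℝ² : 0 ≤ y ≤ x ≤ 1}: (i) the kernel PDE k_xx(x,y) − k_yy(x,y) = λ k(x,y); (ii) the boundary condition k(x,0) = 0 for all x ∈ [0,1]; and (iii) the diagonal condition k(x,x) = −λ x / 2 for all x ∈ [0,1]. (This series is the closed-form backstepping kernel −λ y I₁(√(λ(x²−y²)))/√(λ(x²−y²)) expressed through the first-order modified Bessel function of the first kind.) -/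

import Mathlib

open Set

noncomputable def cc (a n : ℕ) : ℝ :=
  ((n.factorial : ℝ) * ((n + a).factorial : ℝ))⁻¹

lemma cc_pos (a n : ℕ) : 0 < cc a n := by
  unfold cc
  positivity

lemma cc_le (a n : ℕ) : cc a n ≤ ((n.factorial : ℝ))⁻¹ := by
  unfold cc
  rw [inv_le_inv₀ (by positivity) (by positivity)]
  exact le_mul_of_one_le_right (by positivity) (by exact_mod_cast (n + a).factorial_pos)

lemma summable_cc (a : ℕ) (t : ℝ) : Summable fun n => cc a n * |t| ^ n := by
  refine Summable.of_nonneg_of_le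
    (fun n => mul_nonneg (cc_pos a n).le (by positivity)) (fun n => ?_)
    (Real.summable_pow_div_factorial |t|)
  rw [div_eq_inv_mul]
  exact mul_le_mul_of_nonneg_right (cc_le a n) (by positivity)

lemma summable_cc' (a : ℕ) (t : ℝ) : Summable fun n => cc a n * t ^ n := by
  have h : Summable fun n => |cc a n * t ^ n| :=
    (summable_cc a t).congr fun n => by
      rw [abs_mul, abs_of_pos (cc_pos a n), abs_pow]
  exact h.of_abs

noncomputable def FF (a : ℕ) (t : ℝ) : ℝ := ∑' n, cc a n * t ^ n

lemma cc_succ_mul (a n : ℕ) : cc a (n + 1) * (n + 1 : ℝ) = cc (a + 1) n := by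
  unfold cc
  rw [show n + 1 + a = (n + a + 1) from by ring, Nat.factorial_succ n,
    Nat.factorial_succ (n + a), show n + (a + 1) = n + a + 1 from by ring,
    Nat.factorial_succ (n + a)]
  push_cast
  have h1 : (n.factorial : ℝ) ≠ 0 := by positivity
  have h2 : ((n + a).factorial : ℝ) ≠ 0 := by positivity
  have h3 : (n : ℝ) + 1 ≠ 0 := by positivity
  have h4 : (n : ℝ) + (a : ℝ) + 1 ≠ 0 := by positivity
  field_simp

lemma summable_deriv_bound (a : ℕ) (R : ℝ) (hR : 1 ≤ R) {x : ℝ} (hx : |x| ≤ R) (n : ℕ) :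
    |cc a n * ((n : ℝ) * x ^ (n - 1))| ≤ (2 * R) ^ n / n.factorial := by
  have hR0 : (0:ℝ) ≤ R := le_trans zero_le_one hR
  have h1 : |cc a n * ((n : ℝ) * x ^ (n - 1))| = cc a n * ((n : ℝ) * |x| ^ (n - 1)) := by
    rw [abs_mul, abs_of_pos (cc_pos a n), abs_mul, abs_pow, Nat.abs_cast]
  rw [h1]
  calc cc a n * ((n : ℝ) * |x| ^ (n - 1))
      ≤ (n.factorial : ℝ)⁻¹ * ((2:ℝ) ^ n * R ^ n) := by
        refine mul_le_mul (cc_le a n) ?_ (by positivity) (by positivity)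
        refine mul_le_mul ?_ ?_ (by positivity) (by positivity)
        · exact_mod_cast n.lt_two_pow_self.le
        · calc |x| ^ (n-1) ≤ R ^ (n-1) := pow_le_pow_left₀ (abs_nonneg x) hx _
            _ ≤ R ^ n := pow_le_pow_right₀ hR (Nat.sub_le n 1)
    _ = (2 * R) ^ n / n.factorial := by rw [mul_pow]; ring

lemma hasDerivAt_FF (a : ℕ) (t : ℝ) : HasDerivAt (FF a) (FF (a + 1) t) t := by
  set R : ℝ := |t| + 1 with hRdef
  have hR : 1 ≤ R := le_add_of_nonneg_left (abs_nonneg t)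
  have hu : Summable fun n : ℕ => (2 * R) ^ n / (n.factorial : ℝ) :=
    Real.summable_pow_div_factorial _
  have htmem : t ∈ Metric.ball (0:ℝ) R := by
    simp [hRdef, Real.dist_eq]
  have key := hasDerivAt_tsum_of_isPreconnected hu Metric.isOpen_ball
    (convex_ball (0:ℝ) R).isPreconnected
    (g := fun n z => cc a n * z ^ n)
    (g' := fun n z => cc a n * ((n : ℝ) * z ^ (n - 1)))
    (fun n z _ => (hasDerivAt_pow n z).const_mul (cc a n))
    (fun n z hz => by
      rw [Real.norm_eq_abs]
      exact summable_deriv_bound a R hR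
        (by simpa [Real.dist_eq] using (Metric.mem_ball.1 hz).le) n)
    htmem (summable_cc' a t) htmem
  have hsum : Summable fun n : ℕ => cc a n * ((n : ℝ) * t ^ (n - 1)) := by
    refine (Summable.of_norm_bounded hu fun n => ?_)
    rw [Real.norm_eq_abs]
    exact summable_deriv_bound a R hR (by simp [hRdef]) n
  have hval : (∑' n : ℕ, cc a n * ((n : ℝ) * t ^ (n - 1))) = FF (a + 1) t := by
    rw [hsum.tsum_eq_zero_add]
    simp only [Nat.cast_zero, zero_mul, mul_zero, zero_add]
    unfold FF
    refine tsum_congr fun n => ?_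
    rw [Nat.add_sub_cancel]
    push_cast
    rw [← cc_succ_mul a n]
    ring
  rw [hval] at key
  exact key

lemma cc_zero_one : cc 1 0 = 1 := by norm_num [cc, Nat.factorial]
lemma cc_zero_two : cc 2 0 = 2⁻¹ := by norm_num [cc, Nat.factorial]

lemma cc_id (n : ℕ) : cc 1 (n + 1) - 2 * cc 2 (n + 1) = cc 3 n := by
  unfold cc
  rw [show n + 1 + 1 = n + 2 from rfl, show n + 1 + 2 = n + 3 from rfl,
    show (n + 3).factorial = (n + 3) * (n + 2).factorial from rfl,
    show (n + 2).factorial = (n + 2) * (n + 1).factorial from rfl,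
    Nat.factorial_succ n]
  push_cast
  have h1 : (n.factorial : ℝ) ≠ 0 := by positivity
  have h2 : ((n + 1).factorial : ℝ) ≠ 0 := by positivity
  have h3 : (n : ℝ) + 1 ≠ 0 := by positivity
  have h4 : (n : ℝ) + 2 ≠ 0 := by positivity
  have h5 : (n : ℝ) + 3 ≠ 0 := by positivity
  field_simp
  ring

lemma FF_identity (t : ℝ) : FF 1 t = 2 * FF 2 t + t * FF 3 t := by
  have h1 := summable_cc' 1 t
  have h2 := summable_cc' 2 t
  have h3 := summable_cc' 3 t
  have key : FF 1 t - 2 * FF 2 t = t * FF 3 t := by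
    have e1 : FF 1 t - 2 * FF 2 t
        = ∑' n : ℕ, (cc 1 n * t ^ n - 2 * (cc 2 n * t ^ n)) := by
      rw [FF, FF, ← tsum_mul_left, ← h1.tsum_sub (h2.mul_left 2)]
    rw [e1, (h1.sub (h2.mul_left 2)).tsum_eq_zero_add]
    have e0 : cc 1 0 * t ^ 0 - 2 * (cc 2 0 * t ^ 0) = 0 := by
      rw [cc_zero_one, cc_zero_two]; ring
    rw [e0, zero_add]
    have e2 : ∀ n : ℕ, cc 1 (n + 1) * t ^ (n + 1) - 2 * (cc 2 (n + 1) * t ^ (n + 1))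
        = t * (cc 3 n * t ^ n) := by
      intro n
      rw [← cc_id n]
      ring
    rw [tsum_congr e2, tsum_mul_left]
    rfl
  linarith

noncomputable def pp (a : ℕ) : FormalMultilinearSeries ℝ ℝ ℝ :=
  fun n => cc a n • ContinuousMultilinearMap.mkPiAlgebraFin ℝ n ℝ

lemma pp_norm (a n : ℕ) : ‖pp a n‖ = cc a n := by
  rw [pp]
  rw [norm_smul (cc a n) (ContinuousMultilinearMap.mkPiAlgebraFin ℝ n ℝ)]
  rw [ContinuousMultilinearMap.norm_mkPiAlgebraFin, Real.norm_eq_abs,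
    abs_of_pos (cc_pos a n), mul_one]

lemma pp_radius (a : ℕ) : (pp a).radius = ⊤ := by
  refine FormalMultilinearSeries.radius_eq_top_of_summable_norm _ fun r => ?_
  refine (summable_cc a r).congr fun n => ?_
  rw [pp_norm, abs_of_nonneg r.coe_nonneg]

lemma pp_sum (a : ℕ) (t : ℝ) : (pp a).sum t = FF a t := by
  rw [FormalMultilinearSeries.sum, FF]
  refine tsum_congr fun n => ?_
  simp [pp, List.prod_ofFn]

lemma analyticOnNhd_FF (a : ℕ) : AnalyticOnNhd ℝ (FF a) univ := by
  have h : HasFPowerSeriesOnBall (pp a).sum (pp a) 0 ⊤ := by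
    have := (pp a).hasFPowerSeriesOnBall (by rw [pp_radius]; exact ENNReal.zero_lt_top)
    rwa [pp_radius] at this
  have h2 := h.analyticOnNhd
  intro x _
  have := h2 x (by simp)
  refine this.congr ?_
  filter_upwards with y using pp_sum a y

/-- The triangular domain `T = {(x,y) : 0 ≤ y ≤ x ≤ 1}`. -/
def Tri : Set (ℝ × ℝ) := {p | 0 ≤ p.2 ∧ p.2 ≤ p.1 ∧ p.1 ≤ 1}

/-- The closed-form backstepping kernel
`k(x,y) = −(λ y/2) Σₙ (λ(x²−y²)/4)ⁿ/(n!(n+1)!)`, i.e.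
`k(x,y) = −λ y I₁(√(λ(x²−y²)))/√(λ(x²−y²))` through the first-order modified Bessel
function of the first kind. -/
noncomputable def besselKernel (lam : ℝ) (x y : ℝ) : ℝ :=
  -(lam * y / 2) *
    ∑' n : ℕ, (lam * (x ^ 2 - y ^ 2) / 4) ^ n /
      ((n.factorial : ℝ) * ((n + 1).factorial : ℝ))

lemma besselKernel_eq (lam x y : ℝ) :
    besselKernel lam x y = -(lam * y / 2) * FF 1 (lam * (x ^ 2 - y ^ 2) / 4) := by
  unfold besselKernel FF
  congr 1
  refine tsum_congr fun n => ?_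
  rw [cc, div_eq_mul_inv, mul_comm]

lemma hasDerivAt_inner_x (lam y x : ℝ) :
    HasDerivAt (fun z : ℝ => lam * (z ^ 2 - y ^ 2) / 4) (lam * x / 2) x := by
  have h := (((hasDerivAt_pow 2 x).sub_const (y ^ 2)).const_mul lam).div_const 4
  refine h.congr_deriv ?_
  norm_num
  ring

lemma hasDerivAt_inner_y (lam x y : ℝ) :
    HasDerivAt (fun z : ℝ => lam * (x ^ 2 - z ^ 2) / 4) (-(lam * y / 2)) y := by
  have h := (((hasDerivAt_pow 2 y).const_sub (x ^ 2)).const_mul lam).div_const 4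
  refine h.congr_deriv ?_
  norm_num
  ring

lemma hasDerivAt_FFcomp_x (a : ℕ) (lam y x : ℝ) :
    HasDerivAt (fun z => FF a (lam * (z ^ 2 - y ^ 2) / 4))
      (FF (a + 1) (lam * (x ^ 2 - y ^ 2) / 4) * (lam * x / 2)) x :=
  (hasDerivAt_FF a _).comp x (hasDerivAt_inner_x lam y x)

lemma hasDerivAt_FFcomp_y (a : ℕ) (lam x y : ℝ) :
    HasDerivAt (fun z => FF a (lam * (x ^ 2 - z ^ 2) / 4))
      (FF (a + 1) (lam * (x ^ 2 - y ^ 2) / 4) * (-(lam * y / 2))) y :=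
  (hasDerivAt_FF a _).comp y (hasDerivAt_inner_y lam x y)

lemma hasDerivAt_k_x (lam y x : ℝ) :
    HasDerivAt (fun z => besselKernel lam z y)
      (-(lam * y / 2) * (FF 2 (lam * (x ^ 2 - y ^ 2) / 4) * (lam * x / 2))) x := by
  simp only [besselKernel_eq]
  exact (hasDerivAt_FFcomp_x 1 lam y x).const_mul _

lemma deriv_k_x_eq (lam y : ℝ) : deriv (fun z' => besselKernel lam z' y)
    = fun z => -(lam * y / 2) * (FF 2 (lam * (z ^ 2 - y ^ 2) / 4) * (lam * z / 2)) :=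
  funext fun z => (hasDerivAt_k_x lam y z).deriv

lemma hasDerivAt_lin (lam x : ℝ) : HasDerivAt (fun z : ℝ => lam * z / 2) (lam / 2) x := by
  have h := ((hasDerivAt_id x).const_mul lam).div_const 2
  simpa using h

lemma hasDerivAt_k_y (lam x y : ℝ) :
    HasDerivAt (fun z => besselKernel lam x z)
      (-(lam / 2) * FF 1 (lam * (x ^ 2 - y ^ 2) / 4) +
        (-(lam * y / 2)) * (FF 2 (lam * (x ^ 2 - y ^ 2) / 4) * (-(lam * y / 2)))) y := by
  simp only [besselKernel_eq]
  exact ((hasDerivAt_lin lam y).neg).mul (hasDerivAt_FFcomp_y 1 lam x y)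

lemma deriv_k_y_eq (lam x : ℝ) : deriv (fun z' => besselKernel lam x z')
    = fun z => -(lam / 2) * FF 1 (lam * (x ^ 2 - z ^ 2) / 4) +
        (-(lam * z / 2)) * (FF 2 (lam * (x ^ 2 - z ^ 2) / 4) * (-(lam * z / 2))) :=
  funext fun z => (hasDerivAt_k_y lam x z).deriv

lemma FF_one_zero : FF 1 0 = 1 := by
  rw [FF, tsum_eq_single 0 (fun n hn => by simp [zero_pow hn])]
  simpa using cc_zero_one

/-- The explicit Bessel-series kernel solves the backstepping kernel equations
`k_xx − k_yy = λ k`, `k(x,0) = 0`, `k(x,x) = −λx/2` on the triangle `T`. -/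
theorem besselKernel_solves_kernel_equations (lam : ℝ) :
    (∀ x y : ℝ, Summable (fun n : ℕ =>
      |(lam * (x ^ 2 - y ^ 2) / 4) ^ n / ((n.factorial : ℝ) * ((n + 1).factorial : ℝ))|)) ∧
    ContDiff ℝ (⊤ : ℕ∞) (fun p : ℝ × ℝ => besselKernel lam p.1 p.2) ∧
    (∀ x y : ℝ, (x, y) ∈ Tri →
      deriv (fun z => deriv (fun z' => besselKernel lam z' y) z) x -
        deriv (fun z => deriv (fun z' => besselKernel lam x z') z) y =
          lam * besselKernel lam x y) ∧
    (∀ x ∈ Icc (0:ℝ) 1, besselKernel lam x 0 = 0) ∧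
    (∀ x ∈ Icc (0:ℝ) 1, besselKernel lam x x = -(lam * x / 2)) := by
  refine ⟨?_, ?_, ?_, ?_, ?_⟩
  · intro x y
    refine (summable_cc 1 (lam * (x ^ 2 - y ^ 2) / 4)).congr fun n => ?_
    have h : |(lam * (x ^ 2 - y ^ 2) / 4) ^ n / ((n.factorial : ℝ) * ((n + 1).factorial : ℝ))|
        = |lam * (x ^ 2 - y ^ 2) / 4| ^ n * ((n.factorial : ℝ) * ((n + 1).factorial : ℝ))⁻¹ := by
      rw [abs_div, abs_pow, abs_of_pos (a := (n.factorial : ℝ) * ((n + 1).factorial : ℝ))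
        (by positivity), div_eq_mul_inv]
    rw [h, cc, mul_comm]
  · have hFF : ContDiff ℝ (⊤ : ℕ∞) (FF 1) :=
      (contDiff_omega_iff_analyticOnNhd.mpr (analyticOnNhd_FF 1)).of_le le_top
    have hinner : ContDiff ℝ (⊤ : ℕ∞) (fun p : ℝ × ℝ => lam * (p.1 ^ 2 - p.2 ^ 2) / 4) :=
      (contDiff_const.mul ((contDiff_fst.pow 2).sub (contDiff_snd.pow 2))).div_const 4
    have houter : ContDiff ℝ (⊤ : ℕ∞) (fun p : ℝ × ℝ => -(lam * p.2 / 2)) :=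
      ((contDiff_const.mul contDiff_snd).div_const 2).neg
    have := houter.mul (hFF.comp hinner)
    simp only [besselKernel_eq]
    exact this
  · intro x y _
    have hxx := ((hasDerivAt_FFcomp_x 2 lam y x).mul (hasDerivAt_lin lam x)).const_mul
      (-(lam * y / 2))
    have h1 := (hasDerivAt_FFcomp_y 1 lam x y).const_mul (-(lam / 2))
    have h2 := ((hasDerivAt_lin lam y).neg).mul
      ((hasDerivAt_FFcomp_y 2 lam x y).mul ((hasDerivAt_lin lam y).neg))
    have hyy := h1.add h2
    simp only [Pi.mul_def, Pi.neg_def, Pi.add_def] at hxx hyy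
    rw [deriv_k_x_eq, deriv_k_y_eq]
    beta_reduce
    rw [hxx.deriv, hyy.deriv, besselKernel_eq]
    linear_combination (lam ^ 2 * y / 2) * FF_identity (lam * (x ^ 2 - y ^ 2) / 4)
  · intro x _
    simp [besselKernel]
  · intro x _
    rw [besselKernel_eq, show lam * (x ^ 2 - x ^ 2) / 4 = 0 by ring, FF_one_zero, mul_one]
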